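/- arXiv:2402.02307 — 2 statements merged into one kernel-verified Lean document; each statement's English description precedes it below -/
import Mathlib

section
/- Let S ∈ ℂ^{L×N} be a matrix with nonzero columns s_1, …, s_N, and let Ŝ ∈ ℂ^{L²×N} be the matrix whose i-th column is conj(s_i) ⊗ s_i. Let K ≥ 1 and δ ≥ 1 be integers with K + δ ≤ N. If the coherence of S satisfies μ(S) < 1/√(K + δ − 1), then every set of K + δ columns of Ŝ is linearly independent; equivalently, spark(Ŝ) > K + δ. -/
open ComplexConjugate

noncomputable section

/-- Complex inner product `⟨x, y⟩ = Σ_k conj(x_k) y_k`. -/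
def cinner {L : ℕ} (x y : Fin L → ℂ) : ℂ := ∑ k, conj (x k) * y k

/-- Euclidean norm. -/
def cnorm {L : ℕ} (x : Fin L → ℂ) : ℝ := Real.sqrt (∑ k, ‖x k‖ ^ 2)

/-- Coherence of a matrix given by its columns. -/
def coherence {L : ℕ} {ι : Type} (s : ι → Fin L → ℂ) : ℝ :=
  sSup {r : ℝ | ∃ k l : ι, k ≠ l ∧
    r = ‖cinner (s k) (s l)‖ / (cnorm (s k) * cnorm (s l))}

/-- Kronecker product of vectors, `(a ⊗ b)_{iL + j} = a_i b_j`. -/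
def kron {L : ℕ} (a b : Fin L → ℂ) : Fin (L * L) → ℂ := fun k =>
  a ⟨k.val / L, Nat.div_lt_of_lt_mul k.isLt⟩ *
  b ⟨k.val % L, Nat.mod_lt _ (by
      rcases Nat.eq_zero_or_pos L with h | h
      · exact absurd k.isLt (by simp [h])
      · exact h)⟩

/-! The Gram matrix of the Khatri–Rao columns `conj sᵢ ⊗ sᵢ` has entries `|⟨sᵢ, sⱼ⟩|²`: its
diagonal is `‖sᵢ‖⁴` and, off the diagonal, `|⟨sᵢ, sⱼ⟩|² ≤ μ² ‖sᵢ‖² ‖sⱼ‖²`, so these columns have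
coherence at most `μ²`. Nonzero vectors `v₁, …, vₘ` with coherence `ν` and `ν (m - 1) < 1` are
linearly independent: if `∑ cᵢ vᵢ = 0`, expanding `‖∑ cᵢ vᵢ‖² = 0` with `tᵢ = ‖cᵢ vᵢ‖` gives
`∑ tᵢ² ≤ ν ∑_{i ≠ j} tᵢ tⱼ ≤ ν (m - 1) ∑ tᵢ²` (the last step is Cauchy–Schwarz), so every `tᵢ = 0`. -/

open Finset
open scoped InnerProductSpace

section Gram

variable {𝕜 E : Type*} [RCLike 𝕜] [NormedAddCommGroup E] [InnerProductSpace 𝕜 E]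
  {ι : Type*} [Fintype ι]

theorem sum_sum_erase_mul_le_card_sub_one_mul_sum_sq [DecidableEq ι] (t : ι → ℝ) :
    ∑ i, ∑ j ∈ univ.erase i, t i * t j ≤ (Fintype.card ι - 1) * ∑ i, t i ^ 2 := by
  have hsplit : ∑ i, ∑ j ∈ univ.erase i, t i * t j = (∑ i, t i) ^ 2 - ∑ i, t i ^ 2 := by
    rw [sq, sum_mul_sum, ← sum_sub_distrib]
    refine sum_congr rfl fun i _ => ?_
    rw [← add_sum_erase _ _ (mem_univ i)]
    ring
  have hcs : (∑ i, t i) ^ 2 ≤ Fintype.card ι * ∑ i, t i ^ 2 := sq_sum_le_card_mul_sum_sq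
  linarith

theorem sum_norm_sq_le_of_sum_eq_zero [DecidableEq ι] {w : ι → E} (hw : ∑ i, w i = 0) {ν : ℝ}
    (hinner : ∀ i j, i ≠ j → ‖⟪w i, w j⟫_𝕜‖ ≤ ν * (‖w i‖ * ‖w j‖)) :
    ∑ i, ‖w i‖ ^ 2 ≤ ν * ∑ i, ∑ j ∈ univ.erase i, ‖w i‖ * ‖w j‖ := by
  have hgram : ∑ i, (‖w i‖ ^ 2 + ∑ j ∈ univ.erase i, RCLike.re ⟪w i, w j⟫_𝕜) = 0 := by
    have h : RCLike.re ⟪∑ i, w i, ∑ j, w j⟫_𝕜 = 0 := by rw [hw, inner_zero_left, map_zero]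
    rw [sum_inner] at h
    simp only [inner_sum, map_sum] at h
    rw [← h]
    refine sum_congr rfl fun i _ => ?_
    rw [← add_sum_erase _ _ (mem_univ i), inner_self_eq_norm_sq_to_K]
    norm_cast
  have hoff : ∀ i, ∀ j ∈ univ.erase i, -(ν * (‖w i‖ * ‖w j‖)) ≤ RCLike.re ⟪w i, w j⟫_𝕜 :=
    fun i j hj => (neg_le_neg (hinner i j (ne_of_mem_erase hj).symm)).trans
      (neg_le_of_abs_le (RCLike.abs_re_le_norm _))
  have hbound := sum_le_sum (s := univ) fun i _ => sum_le_sum (hoff i)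
  simp only [sum_neg_distrib] at hbound
  rw [sum_add_distrib] at hgram
  simp_rw [mul_sum]
  linarith

theorem linearIndependent_of_norm_inner_le {v : ι → E} (hv : ∀ i, v i ≠ 0) {ν : ℝ} (hν₀ : 0 ≤ ν)
    (hinner : ∀ i j, i ≠ j → ‖⟪v i, v j⟫_𝕜‖ ≤ ν * (‖v i‖ * ‖v j‖))
    (hν : ν * (Fintype.card ι - 1) < 1) : LinearIndependent 𝕜 v := by
  classical
  refine Fintype.linearIndependent_iff.2 fun c hc => ?_
  set w : ι → E := fun i => c i • v i
  have hw : ∀ i j, i ≠ j → ‖⟪w i, w j⟫_𝕜‖ ≤ ν * (‖w i‖ * ‖w j‖) := by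
    intro i j hij
    simp only [w, inner_smul_left, inner_smul_right, norm_mul, norm_smul, RCLike.norm_conj]
    have hscaled := mul_le_mul_of_nonneg_left (hinner i j hij)
      (mul_nonneg (norm_nonneg (c i)) (norm_nonneg (c j)))
    linarith
  have hle : ∑ i, ‖w i‖ ^ 2 ≤ (ν * (Fintype.card ι - 1)) * ∑ i, ‖w i‖ ^ 2 := by
    rw [mul_assoc]
    exact (sum_norm_sq_le_of_sum_eq_zero hc hw).trans
      (mul_le_mul_of_nonneg_left (sum_sum_erase_mul_le_card_sub_one_mul_sum_sq _) hν₀)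
  have hzero : ∑ i, ‖w i‖ ^ 2 = 0 := by
    have hnonneg := sum_nonneg fun i (_ : i ∈ univ) => sq_nonneg ‖w i‖
    nlinarith
  intro i
  have hwi : ‖w i‖ ^ 2 = 0 :=
    (sum_eq_zero_iff_of_nonneg fun j _ => sq_nonneg ‖w j‖).1 hzero i (mem_univ i)
  simpa [w, norm_smul, hv i] using hwi

end Gram

section KhatriRao

variable {L : ℕ}

theorem kron_finProdFinEquiv (a b : Fin L → ℂ) (i j : Fin L) :
    kron a b (finProdFinEquiv (i, j)) = a i * b j := by
  -- `finProdFinEquiv.symm k` is `(k / L, k % L)`, exactly the indexing used by `kron`.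
  have hkron : ∀ k, kron a b k = a (finProdFinEquiv.symm k).1 * b (finProdFinEquiv.symm k).2 :=
    fun _ => rfl
  rw [hkron, Equiv.symm_apply_apply]

theorem cinner_eq_inner (x y : Fin L → ℂ) :
    cinner x y = ⟪WithLp.toLp 2 x, WithLp.toLp 2 y⟫_ℂ := by
  simp [cinner, PiLp.inner_apply, mul_comm]

theorem cnorm_eq_norm (x : Fin L → ℂ) : cnorm x = ‖WithLp.toLp 2 x‖ :=
  (EuclideanSpace.norm_eq _).symm

theorem cinner_kron_conj (a b : Fin L → ℂ) :
    cinner (kron (fun k => conj (a k)) a) (kron (fun k => conj (b k)) b)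
      = (‖cinner a b‖ ^ 2 : ℝ) := by
  rw [Complex.ofReal_pow, ← Complex.conj_mul', cinner, ← finProdFinEquiv.sum_comp,
    Fintype.sum_prod_type]
  simp only [kron_finProdFinEquiv, cinner, map_sum, map_mul, Complex.conj_conj, sum_mul_sum]
  refine sum_congr rfl fun i _ => sum_congr rfl fun j _ => ?_
  ring

theorem norm_cinner_le_cnorm_mul_cnorm (x y : Fin L → ℂ) : ‖cinner x y‖ ≤ cnorm x * cnorm y := by
  rw [cinner_eq_inner, cnorm_eq_norm, cnorm_eq_norm]
  exact norm_inner_le_norm _ _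

theorem norm_cinner_self (x : Fin L → ℂ) : ‖cinner x x‖ = cnorm x ^ 2 := by
  rw [cinner_eq_inner, cnorm_eq_norm, inner_self_eq_norm_sq_to_K]
  norm_cast
  exact Real.norm_of_nonneg (sq_nonneg _)

def khatriRaoColumn (a : Fin L → ℂ) : EuclideanSpace ℂ (Fin (L * L)) :=
  WithLp.toLp 2 (kron (fun k => conj (a k)) a)

theorem inner_khatriRaoColumn (a b : Fin L → ℂ) :
    ⟪khatriRaoColumn a, khatriRaoColumn b⟫_ℂ = (‖cinner a b‖ ^ 2 : ℝ) := by
  rw [khatriRaoColumn, khatriRaoColumn, ← cinner_eq_inner, cinner_kron_conj]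

theorem norm_khatriRaoColumn (a : Fin L → ℂ) : ‖khatriRaoColumn a‖ = cnorm a ^ 2 := by
  have hsq : ‖khatriRaoColumn a‖ ^ 2 = (cnorm a ^ 2) ^ 2 := by
    rw [← norm_cinner_self, norm_sq_eq_re_inner (𝕜 := ℂ), inner_khatriRaoColumn]
    exact Complex.ofReal_re _
  exact (pow_left_inj₀ (norm_nonneg _) (by positivity) two_ne_zero).1 hsq

theorem khatriRaoColumn_ne_zero {a : Fin L → ℂ} (ha : a ≠ 0) : khatriRaoColumn a ≠ 0 := by
  rw [← norm_ne_zero_iff, norm_khatriRaoColumn, cnorm_eq_norm]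
  simpa using ha

end KhatriRao

section Coherence

variable {L : ℕ} {ι : Type}

theorem div_le_coherence [Finite ι] (s : ι → Fin L → ℂ) {k l : ι} (hkl : k ≠ l) :
    ‖cinner (s k) (s l)‖ / (cnorm (s k) * cnorm (s l)) ≤ coherence s := by
  refine le_csSup (Set.Finite.bddAbove ?_) ⟨k, l, hkl, rfl⟩
  refine (Set.finite_range fun p : ι × ι =>
    ‖cinner (s p.1) (s p.2)‖ / (cnorm (s p.1) * cnorm (s p.2))).subset ?_
  rintro r ⟨k, l, -, rfl⟩
  exact ⟨(k, l), rfl⟩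

theorem coherence_nonneg [Finite ι] (s : ι → Fin L → ℂ) {k l : ι} (hkl : k ≠ l) :
    0 ≤ coherence s :=
  (div_nonneg (norm_nonneg _) (mul_nonneg (Real.sqrt_nonneg _) (Real.sqrt_nonneg _))).trans
    (div_le_coherence s hkl)

theorem norm_cinner_le_coherence_mul [Finite ι] (s : ι → Fin L → ℂ) {k l : ι} (hkl : k ≠ l) :
    ‖cinner (s k) (s l)‖ ≤ coherence s * (cnorm (s k) * cnorm (s l)) := by
  rcases (mul_nonneg (Real.sqrt_nonneg _) (Real.sqrt_nonneg _) :
    0 ≤ cnorm (s k) * cnorm (s l)).eq_or_lt with h | h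
  · simpa [← h] using norm_cinner_le_cnorm_mul_cnorm (s k) (s l)
  · exact (div_le_iff₀ h).1 (div_le_coherence s hkl)

theorem norm_inner_khatriRaoColumn_le [Finite ι] (s : ι → Fin L → ℂ) {k l : ι} (hkl : k ≠ l) :
    ‖⟪khatriRaoColumn (s k), khatriRaoColumn (s l)⟫_ℂ‖
      ≤ coherence s ^ 2 * (‖khatriRaoColumn (s k)‖ * ‖khatriRaoColumn (s l)‖) := by
  rw [inner_khatriRaoColumn, norm_khatriRaoColumn, norm_khatriRaoColumn, Complex.norm_real,
    Real.norm_of_nonneg (sq_nonneg _)]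
  calc ‖cinner (s k) (s l)‖ ^ 2 ≤ (coherence s * (cnorm (s k) * cnorm (s l))) ^ 2 :=
        pow_le_pow_left₀ (norm_nonneg _) (norm_cinner_le_coherence_mul s hkl) 2
    _ = coherence s ^ 2 * (cnorm (s k) ^ 2 * cnorm (s l) ^ 2) := by ring

theorem sq_mul_lt_one_of_lt_one_div_sqrt {μ x : ℝ} (hμ : 0 ≤ μ) (h : μ < 1 / √x) :
    μ ^ 2 * x < 1 := by
  rcases le_or_gt x 0 with hx | hx
  · exact (mul_nonpos_of_nonneg_of_nonpos (sq_nonneg μ) hx).trans_lt one_pos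
  · have hμx : μ * √x < 1 := (lt_div_iff₀ (Real.sqrt_pos.2 hx)).1 h
    calc μ ^ 2 * x = (μ * √x) ^ 2 := by rw [mul_pow, Real.sq_sqrt hx.le]
      _ < 1 := pow_lt_one₀ (by positivity) hμx two_ne_zero

theorem sq_coherence_mul_card_sub_one_lt_one [Finite ι] (s : ι → Fin L → ℂ) (T : Finset ι)
    (h : coherence s < 1 / √(T.card - 1)) : coherence s ^ 2 * (T.card - 1) < 1 := by
  rcases le_or_gt T.card 1 with hT | hT
  · have hcard : (T.card : ℝ) - 1 ≤ 0 := by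
      rw [sub_nonpos]
      exact_mod_cast hT
    exact (mul_nonpos_of_nonneg_of_nonpos (sq_nonneg _) hcard).trans_lt one_pos
  · obtain ⟨k, -, l, -, hkl⟩ := one_lt_card.1 hT
    exact sq_mul_lt_one_of_lt_one_div_sqrt (coherence_nonneg s hkl) h

end Coherence

theorem khatriRao_columns_linearIndependent_of_coherence_lt_general
    (L N K δ : ℕ)
    (s : Fin N → Fin L → ℂ) (hs : ∀ i, s i ≠ 0)
    (hcoh : coherence s < 1 / Real.sqrt ((K : ℝ) + (δ : ℝ) - 1)) :
    ∀ T : Finset (Fin N), T.card = K + δ →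
      LinearIndependent ℂ (fun i : T => kron (fun k => conj (s i.1 k)) (s i.1)) := by
  intro T hT
  have hν : coherence s ^ 2 * (Fintype.card T - 1) < 1 := by
    rw [Fintype.card_coe]
    refine sq_coherence_mul_card_sub_one_lt_one s T ?_
    rwa [hT, Nat.cast_add]
  refine LinearIndependent.of_comp (WithLp.linearEquiv 2 ℂ (Fin (L * L) → ℂ)).symm.toLinearMap ?_
  exact linearIndependent_of_norm_inner_le (fun i => khatriRaoColumn_ne_zero (hs i)) (sq_nonneg _)
    (fun i j hij => norm_inner_khatriRaoColumn_le s (Subtype.coe_injective.ne hij)) hν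

/-- if `μ(S) < 1/√(K + δ − 1)` then every set of `K + δ` columns of the
Khatri–Rao product `Ŝ` is linearly independent, i.e. `spark(Ŝ) > K + δ`. -/
theorem khatriRao_columns_linearIndependent_of_coherence_lt
    (L N K δ : ℕ) (hK : 1 ≤ K) (hδ : 1 ≤ δ) (hKδ : K + δ ≤ N)
    (s : Fin N → Fin L → ℂ) (hs : ∀ i, s i ≠ 0)
    (hcoh : coherence s < 1 / Real.sqrt ((K : ℝ) + (δ : ℝ) - 1)) :
    ∀ T : Finset (Fin N), T.card = K + δ →
      LinearIndependent ℂ (fun i : T => kron (fun k => conj (s i.1 k)) (s i.1)) :=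
  khatriRao_columns_linearIndependent_of_coherence_lt_general L N K δ s hs hcoh

end
end

section
/- Let p be an odd prime, m ≥ 1, q = p^m, L = q − 1, let F_q be a finite field with q elements, let α be a generator of F_q^×, and let Tr : F_q → F_p be the field trace, with values identified with integers in {0, …, p−1}. For λ ∈ {0, …, L−1} and c ∈ {0, …, L−1} define φ_{λ,c} ∈ ℂ^L by φ_{λ,c}(k) = (1/√L) · e^{2πi Tr(α^{k+λ})/p} · e^{−2πi kc/L} for k ∈ {0, …, L−1}. Then for all pairs (λ,c) ≠ (λ',c'), |⟨φ_{λ,c}, φ_{λ',c'}⟩| ≤ (√(L+1) + 2)/L. -/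
open ComplexConjugate

noncomputable section

/-! If `λ = λ'`, the inner product is `L⁻¹` times a geometric sum of the nontrivial `L`-th root of
unity `η = e^{2πi(c - c')/L}`, hence zero. Otherwise it is `L⁻¹ S` with
`S = ∑_k ψ(α^k β) η^k`, `ψ = e^{2πi Tr(·)/p}` and `β = α^{λ'} - α^λ ≠ 0`. Letting `θ` be the
multiplicative character of `F_q` with `θ(α) = η`, the sum `θ(β) S` runs over all of `F_q^×` and
is the Gauss sum `g(θ, ψ)`, of absolute value `√q` if `θ ≠ 1` and `1` if `θ = 1`.
So `|⟨φ_{λ,c}, φ_{λ',c'}⟩| ≤ √(L + 1) / L`. -/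

lemma AddChar.starRingEnd_apply_mul_apply {A : Type*} [AddCommGroup A] [Finite A]
    (ψ : AddChar A ℂ) (a b : A) : conj (ψ a) * ψ b = ψ (b - a) := by
  rw [← AddChar.map_neg_eq_conj, ← AddChar.map_add_eq_mul, neg_add_eq_sub]

lemma AddChar.zmod_apply_pow_eq_one {N : ℕ} {M : Type*} [Monoid M] (ψ : AddChar (ZMod N) M)
    (x : ZMod N) : ψ x ^ N = 1 := by
  rw [← AddChar.map_nsmul_eq_pow, nsmul_eq_mul, ZMod.natCast_self, zero_mul,
    AddChar.map_zero_eq_one]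

lemma ZMod.stdAddChar_natCast_sub_ne_one {L : ℕ} [NeZero L] {c c' : Fin L} (h : c ≠ c') :
    ZMod.stdAddChar (c.val - c'.val : ZMod L) ≠ 1 := fun h1 ↦ h <| Fin.ext <| by
  have h0 := sub_eq_zero.mp <|
    ZMod.injective_stdAddChar <| h1.trans (AddChar.map_zero_eq_one _).symm
  simpa [ZMod.val_natCast_of_lt c.isLt, ZMod.val_natCast_of_lt c'.isLt] using congrArg ZMod.val h0

def traceAddChar (p : ℕ) [NeZero p] (F : Type*) [CommRing F] [Algebra (ZMod p) F] :
    AddChar F ℂ :=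
  ZMod.stdAddChar.compAddMonoidHom (Algebra.trace (ZMod p) F).toAddMonoidHom

lemma traceAddChar_apply {p : ℕ} [NeZero p] {F : Type*} [CommRing F] [Algebra (ZMod p) F]
    (x : F) : traceAddChar p F x =
      Complex.exp (2 * Real.pi * Complex.I * (Algebra.trace (ZMod p) F x).val / p) :=
  ZMod.toCircle_apply _

lemma isPrimitive_traceAddChar (p : ℕ) [Fact p.Prime] (F : Type*) [Field F] [Finite F]
    [Algebra (ZMod p) F] : (traceAddChar p F).IsPrimitive := by
  refine AddChar.IsPrimitive.of_ne_one fun h ↦ ?_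
  have : Module.Finite (ZMod p) F := Module.Finite.of_finite
  obtain ⟨x, hx⟩ := Algebra.trace_surjective (ZMod p) F 1
  have h1 : ZMod.stdAddChar (1 : ZMod p) = ZMod.stdAddChar (0 : ZMod p) := by
    rw [AddChar.map_zero_eq_one (ψ := ZMod.stdAddChar (N := p)), ← hx]
    exact DFunLike.congr_fun h x
  exact one_ne_zero (ZMod.injective_stdAddChar h1)

def MulChar.ofGenerator {R R' : Type*} [CommMonoid R] [CommMonoidWithZero R'] {u : Rˣ}
    (hu : ∀ x, x ∈ Subgroup.zpowers u) (η : R'ˣ) (hη : η ^ orderOf u = 1) : MulChar R R' :=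
  MulChar.ofUnitHom (monoidHomOfForallMemZpowers hu (orderOf_dvd_of_pow_eq_one hη))

lemma MulChar.ofGenerator_apply_pow {R R' : Type*} [CommMonoid R] [CommMonoidWithZero R']
    {u : Rˣ} (hu : ∀ x, x ∈ Subgroup.zpowers u) (η : R'ˣ) (hη : η ^ orderOf u = 1) (k : ℕ) :
    MulChar.ofGenerator hu η hη ((u ^ k : Rˣ) : R) = (η ^ k : R'ˣ) := by
  rw [MulChar.ofGenerator, MulChar.ofUnitHom_coe, map_pow, monoidHomOfForallMemZpowers_apply_gen]

lemma MulChar.norm_apply_unit {R : Type*} [CommRing R] [Finite Rˣ] (θ : MulChar R ℂ) (a : Rˣ) :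
    ‖θ a‖ = 1 := by
  cases nonempty_fintype Rˣ
  rw [← MulChar.coe_equivToUnitHom]
  exact Complex.norm_eq_one_of_mem_rootsOfUnity (θ.apply_mem_rootsOfUnity a)

lemma norm_gaussSum_eq_sqrt_card {F : Type*} [Field F] [Fintype F] {θ : MulChar F ℂ}
    (hθ : θ ≠ 1) {ψ : AddChar F ℂ} (hψ : ψ.IsPrimitive) :
    ‖gaussSum θ ψ‖ = √(Fintype.card F) := by
  have h := gaussSum_mul_gaussSum_eq_card hθ hψ
  rw [← star_gaussSum_eq, RCLike.star_def, Complex.mul_conj, Complex.normSq_eq_norm_sq] at h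
  have h' : ‖gaussSum θ ψ‖ ^ 2 = Fintype.card F := by exact_mod_cast h
  rw [← h', Real.sqrt_sq (norm_nonneg _)]

lemma norm_gaussSum_le_sqrt_card {F : Type*} [Field F] [Fintype F] (θ : MulChar F ℂ)
    {ψ : AddChar F ℂ} (hψ : ψ.IsPrimitive) :
    ‖gaussSum θ ψ‖ ≤ √(Fintype.card F) := by
  obtain rfl | hθ := eq_or_ne θ 1
  · rw [gaussSum_one_left (by simpa using hψ one_ne_zero), norm_neg, norm_one, Real.one_le_sqrt]
    exact_mod_cast Fintype.card_pos
  · exact (norm_gaussSum_eq_sqrt_card hθ hψ).le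

lemma sum_fin_pow_eq_sum {G M : Type*} [Group G] [Fintype G] [AddCommMonoid M] {u : G}
    (hu : ∀ x, x ∈ Subgroup.zpowers u) {L : ℕ} (hL : orderOf u = L) (f : G → M) :
    ∑ k : Fin L, f (u ^ (k : ℕ)) = ∑ x, f x := by
  subst hL
  exact Fintype.sum_equiv ((finEquivZPowers (isOfFinOrder_of_finite u)).trans
    (Equiv.subtypeUnivEquiv hu)) _ _ fun k ↦ by simp [finEquivZPowers_apply]

lemma sum_units_eq_sum {G₀ M : Type*} [GroupWithZero G₀] [Fintype G₀] [Fintype G₀ˣ]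
    [AddCommMonoid M] {f : G₀ → M} (hf : f 0 = 0) : ∑ x : G₀ˣ, f x = ∑ x, f x := by
  classical
  rw [← Finset.sum_erase_add Finset.univ _ (Finset.mem_univ (0 : G₀)), hf, add_zero,
    Finset.sum_subtype (Finset.univ.erase 0) (p := (· ≠ 0)) (fun x ↦ by simp)]
  exact Fintype.sum_equiv unitsEquivNeZero _ _ fun x ↦ rfl

lemma sum_fin_pow_eq_zero {K : Type*} [DivisionRing K] {L : ℕ} {η : K} (hη : η ^ L = 1)
    (hη1 : η ≠ 1) : ∑ k : Fin L, η ^ (k : ℕ) = 0 := by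
  rw [Fin.sum_univ_eq_sum_range (η ^ ·) L, geom_sum_eq hη1, hη, sub_self, zero_div]

lemma norm_sum_addChar_mul_pow_le {F : Type*} [Field F] [Fintype F] {ψ : AddChar F ℂ}
    (hψ : ψ.IsPrimitive) {u : Fˣ} (hu : ∀ x, x ∈ Subgroup.zpowers u) {L : ℕ}
    (hL : orderOf u = L) {η : ℂ} (hη : η ^ L = 1) {β : F} (hβ : β ≠ 0) :
    ‖∑ k : Fin L, ψ ((u : F) ^ (k : ℕ) * β) * η ^ (k : ℕ)‖ ≤ √(Fintype.card F) := by
  classical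
  have hη0 : η ≠ 0 := by
    rintro rfl
    simp [← hL, (orderOf_pos u).ne'] at hη
  set θ := MulChar.ofGenerator hu (Units.mk0 η hη0) (Units.ext (by simp [hL, hη]))
  set b := Units.mk0 β hβ
  have hθ (k : ℕ) : θ ((u : F) ^ k) = η ^ k := by
    simpa using MulChar.ofGenerator_apply_pow hu (Units.mk0 η hη0) _ k
  have hgauss : θ β * ∑ k : Fin L, ψ ((u : F) ^ (k : ℕ) * β) * η ^ (k : ℕ) = gaussSum θ ψ :=
    calc _ = ∑ k : Fin L, θ ((u ^ (k : ℕ) * b : Fˣ) : F) * ψ ((u ^ (k : ℕ) * b : Fˣ) : F) := by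
          rw [Finset.mul_sum]
          refine Finset.sum_congr rfl fun k _ ↦ ?_
          simp only [Units.val_mul, Units.val_pow_eq_pow_val, map_mul, hθ, b, Units.val_mk0]
          ring
      _ = ∑ x : Fˣ, θ ((x * b : Fˣ) : F) * ψ ((x * b : Fˣ) : F) :=
          sum_fin_pow_eq_sum hu hL fun x ↦ θ ((x * b : Fˣ) : F) * ψ ((x * b : Fˣ) : F)
      _ = ∑ x : Fˣ, θ x * ψ x := Equiv.sum_comp (Equiv.mulRight b) fun x : Fˣ ↦ θ x * ψ x
      _ = gaussSum θ ψ :=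
          sum_units_eq_sum (f := fun x ↦ θ x * ψ x) (by simp only [θ.map_zero, zero_mul])
  calc _ = ‖gaussSum θ ψ‖ := by
        rw [← hgauss, norm_mul, show β = (b : F) from rfl, θ.norm_apply_unit, one_mul]
    _ ≤ _ := norm_gaussSum_le_sqrt_card θ hψ

lemma exists_units_generator {F : Type*} [Field F] [Fintype F] [Nontrivial Fˣ] {α : F}
    (hα : ∀ x : F, x ≠ 0 → ∃ t : ℕ, α ^ t = x) :
    ∃ u : Fˣ, (u : F) = α ∧ (∀ x, x ∈ Subgroup.zpowers u) ∧ orderOf u = Fintype.card F - 1 := by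
  classical
  have hα0 : α ≠ 0 := by
    rintro rfl
    obtain ⟨x, hx⟩ := exists_ne (1 : Fˣ)
    obtain ⟨_ | s, hs⟩ := hα x x.ne_zero
    · exact hx (Units.ext (by simpa using hs.symm))
    · exact x.ne_zero (by simpa using hs.symm)
  have hu (x : Fˣ) : x ∈ Subgroup.zpowers (Units.mk0 α hα0) := by
    obtain ⟨t, ht⟩ := hα x x.ne_zero
    exact ⟨t, Units.ext (by simp [ht])⟩
  refine ⟨Units.mk0 α hα0, rfl, hu, ?_⟩
  rw [orderOf_eq_card_of_forall_mem_zpowers hu, Nat.card_eq_fintype_card, Fintype.card_units]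

lemma exp_neg_mul_div_eq_stdAddChar (L : ℕ) [NeZero L] (a b : ℕ) :
    Complex.exp (-(2 * Real.pi * Complex.I * a * b) / L) = ZMod.stdAddChar (-(a * b : ZMod L)) := by
  rw [show (-(a * b : ZMod L)) = ((-(a * b : ℤ) : ℤ) : ZMod L) by push_cast; ring,
    ZMod.stdAddChar_coe]
  congr 1
  push_cast
  ring

lemma cinner_masked_dft_columns {F : Type*} [Field F] [Fintype F] (ψ : AddChar F ℂ) (α : F)
    {L : ℕ} [NeZero L] (lam lam' : ℕ) (c c' : Fin L) :
    cinner (fun k : Fin L ↦ 1 / (√L : ℂ) * ψ (α ^ (k.val + lam)) *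
        ZMod.stdAddChar (-(k.val * c.val : ZMod L)))
      (fun k : Fin L ↦ 1 / (√L : ℂ) * ψ (α ^ (k.val + lam')) *
        ZMod.stdAddChar (-(k.val * c'.val : ZMod L))) =
      (L : ℂ)⁻¹ * ∑ k : Fin L, ψ (α ^ k.val * (α ^ lam' - α ^ lam)) *
        ZMod.stdAddChar (c.val - c'.val : ZMod L) ^ k.val := by
  have hL : conj (1 / (√L : ℂ)) * (1 / (√L : ℂ)) = (L : ℂ)⁻¹ := by
    rw [map_div₀, map_one, Complex.conj_ofReal, div_mul_div_comm, one_mul, ← Complex.ofReal_mul,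
      Real.mul_self_sqrt (Nat.cast_nonneg L), Complex.ofReal_natCast, one_div]
  unfold cinner
  rw [Finset.mul_sum]
  refine Finset.sum_congr rfl fun k _ ↦ ?_
  dsimp only
  rw [map_mul, map_mul, show ∀ r a e r' a' e' : ℂ, r * a * e * (r' * a' * e') =
      r * r' * (a * a') * (e * e') from fun _ _ _ _ _ _ ↦ by ring, hL,
    AddChar.starRingEnd_apply_mul_apply, AddChar.starRingEnd_apply_mul_apply, mul_assoc,
    ← AddChar.map_nsmul_eq_pow, nsmul_eq_mul, pow_add, pow_add]
  congr 3 <;> ring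

theorem trace_mask_inner_bound_general (p m : ℕ) (hp : Nat.Prime p)
    (F : Type) [Field F] [Fintype F] [Algebra (ZMod p) F]
    (hcard : Fintype.card F = p ^ m)
    (L : ℕ) (hL : L = p ^ m - 1)
    (α : F) (hα : ∀ x : F, x ≠ 0 → ∃ t : ℕ, α ^ t = x) :
    let φ : ℕ → Fin L → Fin L → ℂ := fun lam c k =>
      (1 / Real.sqrt L) *
        Complex.exp (2 * (Real.pi : ℂ) * Complex.I *
          (((Algebra.trace (ZMod p) F (α ^ (k.val + lam : ℕ))).val : ℕ) : ℂ) / (p : ℂ)) *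
        Complex.exp (-(2 * (Real.pi : ℂ) * Complex.I * (k.val : ℂ) * (c.val : ℂ)) / (L : ℂ))
    ∀ lam lam' : ℕ, ∀ c c' : Fin L, lam < L → lam' < L →
      (lam, c) ≠ (lam', c') →
      ‖cinner (φ lam c) (φ lam' c')‖
        ≤ (Real.sqrt ((L : ℝ) + 1) + 2) / L := by
  intro φ lam lam' c c' hlam hlam' hne
  classical
  have : Fact p.Prime := ⟨hp⟩
  have hcardL : Fintype.card F = L + 1 := by
    have := Fintype.one_lt_card (α := F)
    omega
  have : Nontrivial Fˣ := by
    refine Fintype.one_lt_card_iff_nontrivial.mp ?_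
    rw [Fintype.card_units, hcardL, Nat.add_sub_cancel]
    by_contra! h
    exact hne (Prod.ext (by omega) (Fin.ext (by omega)))
  obtain ⟨u, hαu, hu, horder⟩ := exists_units_generator hα
  rw [hcardL, Nat.add_sub_cancel] at horder
  have : NeZero L := ⟨horder ▸ (orderOf_pos u).ne'⟩
  have hφ : φ = fun lam c k ↦ 1 / (√L : ℂ) * traceAddChar p F (α ^ (k.val + lam)) *
      ZMod.stdAddChar (-(k.val * c.val : ZMod L)) := by
    funext lam c k
    simp only [φ, traceAddChar_apply, exp_neg_mul_div_eq_stdAddChar]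
  have hη := ZMod.stdAddChar.zmod_apply_pow_eq_one (c.val - c'.val : ZMod L)
  rw [hφ, cinner_masked_dft_columns, norm_mul, norm_inv, Complex.norm_natCast, inv_mul_eq_div]
  gcongr
  obtain rfl | hll := eq_or_ne lam lam'
  · have hη1 := ZMod.stdAddChar_natCast_sub_ne_one fun h : c = c' ↦ hne (h ▸ rfl)
    simp only [sub_self, mul_zero, AddChar.map_zero_eq_one, one_mul]
    rw [sum_fin_pow_eq_zero hη hη1, norm_zero]
    positivity
  · have hβ : (u : F) ^ lam' - (u : F) ^ lam ≠ 0 := sub_ne_zero.mpr fun h ↦ hll <| Eq.symm <|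
      pow_injOn_Iio_orderOf (horder ▸ hlam') (horder ▸ hlam) (Units.ext (by simpa using h))
    rw [← hαu]
    calc _ ≤ √(Fintype.card F) :=
          norm_sum_addChar_mul_pow_le (isPrimitive_traceAddChar p F) hu horder hη hβ
      _ ≤ _ := by rw [hcardL]; push_cast; linarith

/-- for an odd prime `p`, a finite field `F` with `q = p^m` elements,
`L = q − 1`, a generator `α` of `F^×`, and the field trace `Tr : F → ZMod p` (values
identified with integers in `{0,…,p−1}` via `ZMod.val`), the m-sequence masked DFT
columns `φ_{λ,c}(k) = (1/√L) e^{2πi Tr(α^{k+λ})/p} e^{−2πi kc/L}` satisfy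
`|⟨φ_{λ,c}, φ_{λ',c'}⟩| ≤ (√(L+1) + 2)/L` for all `(λ,c) ≠ (λ',c')`. -/
theorem trace_mask_inner_bound (p m : ℕ) (hp : Nat.Prime p) (hodd : Odd p) (hm : 1 ≤ m)
    (F : Type) [Field F] [Fintype F] [Algebra (ZMod p) F]
    (hcard : Fintype.card F = p ^ m)
    (L : ℕ) (hL : L = p ^ m - 1)
    (α : F) (hα : ∀ x : F, x ≠ 0 → ∃ t : ℕ, α ^ t = x) :
    let φ : ℕ → Fin L → Fin L → ℂ := fun lam c k =>
      (1 / Real.sqrt L) *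
        Complex.exp (2 * (Real.pi : ℂ) * Complex.I *
          (((Algebra.trace (ZMod p) F (α ^ (k.val + lam : ℕ))).val : ℕ) : ℂ) / (p : ℂ)) *
        Complex.exp (-(2 * (Real.pi : ℂ) * Complex.I * (k.val : ℂ) * (c.val : ℂ)) / (L : ℂ))
    ∀ lam lam' : ℕ, ∀ c c' : Fin L, lam < L → lam' < L →
      (lam, c) ≠ (lam', c') →
      ‖cinner (φ lam c) (φ lam' c')‖
        ≤ (Real.sqrt ((L : ℝ) + 1) + 2) / L :=
  trace_mask_inner_bound_general p m hp F hcard L hL α hα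

end
end
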